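/- Assume F ∈ PSAP_{ω,r}(C,X) and there exists a bounded continuous function L_F : [0,∞) → ℝ⁺ such that ‖F(t,ψ₁) − F(t,ψ₂)‖ ≤ L_F(t)‖ψ₁ − ψ₂‖_C for all t ∈ [0,∞) and ψ₁, ψ₂ ∈ C. If u ∈ C_b([−r,∞),X) and the restriction of u to [0,∞) belongs to PSAP_{ω,r}(X), then the function s ↦ F(s, u_s) belongs to PSAP_{ω,r}(X). -/

import Mathlib

/-!
Write `a τ = sup_{‖x‖ ≤ L} ‖F (τ + ω) x - F τ x‖` and `c σ = ‖u (σ + ω) - u σ‖`. Splitting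
`F (τ + ω) u_{τ+ω} - F τ u_τ` through `F τ u_{τ+ω}` and using the Lipschitz bound `B` gives
`‖F (τ + ω) u_{τ+ω} - F τ u_τ‖ ≤ a τ + B ‖u_{τ+ω} - u_τ‖ ≤ a τ + B sup_{[τ-r,τ]} c`,
so the supremum over a window `[s - r, s]` is at most
`sup_{[s-r,s]} a + B (sup_{[s-r,s]} c + sup_{[s-2r,s-r]} c)`. After averaging over `[r, T]`
the delayed last term differs from the undelayed one by the constant `∫₀ʳ`, killed by `1 / T`.

The integrals are Bochner integrals, so the window supremum of `a` has to be integrable: it is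
lower semicontinuous, as a supremum of continuous functions, and locally bounded. Replacing `F t`
by `F (max t 0)` and `u t` by `u (max t (-r))` makes all data continuous on `ℝ` without changing
anything on `[0, ∞)`.
-/

open MeasureTheory Filter Set

/-- `v ∈ PSAP_{ω,r}(Y)`: pseudo S-asymptotically ω-periodic of class r. -/
def PSAPclass {Y : Type*} [NormedAddCommGroup Y] (ω r : ℝ) (v : ℝ → Y) : Prop :=
  Tendsto (fun T : ℝ => (1 / T) * ∫ s in r..T, ⨆ τ ∈ Set.Icc (s - r) s, ‖v (τ + ω) - v τ‖)
    atTop (nhds 0)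

/-- `F ∈ PSAP_{ω,r}(E,Y)`: uniformly pseudo S-asymptotically ω-periodic of class r. -/
def PSAPunif {E Y : Type*} [NormedAddCommGroup E] [NormedAddCommGroup Y] (ω r : ℝ)
    (F : ℝ → E → Y) : Prop :=
  ∀ L > 0, Tendsto (fun T : ℝ => (1 / T) * ∫ s in r..T,
      ⨆ τ ∈ Set.Icc (s - r) s, ⨆ x ∈ {x : E | ‖x‖ ≤ L}, ‖F (τ + ω) x - F τ x‖)
    atTop (nhds 0)

/-- The history `u_t ∈ C([−r,0],X)`, `u_t(θ) = u(t+θ)`. -/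
noncomputable def hist {X : Type*} [NormedAddCommGroup X] (r : ℝ) (u : ℝ → X) (t : ℝ) :
    C(Set.Icc (-r) (0:ℝ), X) := by
  classical
  exact if h : Continuous (fun θ : Set.Icc (-r) (0:ℝ) => u (t + ↑θ)) then ⟨_, h⟩ else 0

open scoped Topology NNReal

/- In `ℝ`, `⨆ _ : a ∈ S, f a` is `0` when `a ∉ S`, and so is a supremum that is not bounded above;
hence the hypotheses `0 ≤ M` and `BddAbove` below. -/
namespace Real

variable {α : Type*} {f : α → ℝ} {S : Set α}

lemma biSup_le {M : ℝ} (hM : 0 ≤ M) (h : ∀ a ∈ S, f a ≤ M) : ⨆ a ∈ S, f a ≤ M :=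
  Real.iSup_le (fun a => Real.iSup_le (h a) hM) hM

lemma biSup_nonneg (hf : ∀ a ∈ S, 0 ≤ f a) : 0 ≤ ⨆ a ∈ S, f a :=
  Real.iSup_nonneg fun a => Real.iSup_nonneg (hf a)

lemma bddAbove_range_biSup (hf : BddAbove (f '' S)) :
    BddAbove (range fun a => ⨆ _ : a ∈ S, f a) := by
  obtain ⟨M, hM⟩ := hf
  exact ⟨max M 0, forall_mem_range.2 fun a => Real.iSup_le
    (fun ha => (hM (mem_image_of_mem f ha)).trans (le_max_left _ _)) (le_max_right _ _)⟩

lemma le_biSup (hf : BddAbove (f '' S)) {a : α} (ha : a ∈ S) : f a ≤ ⨆ b ∈ S, f b :=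
  le_ciSup_of_le (bddAbove_range_biSup hf) a (ciSup_pos (f := fun _ => f a) ha).ge

lemma lowerSemicontinuous_biSup {Y : Type*} [TopologicalSpace Y] {g : α → Y → ℝ}
    (hg : ∀ a ∈ S, LowerSemicontinuous (g a)) (hbdd : ∀ y, BddAbove ((g · y) '' S)) :
    LowerSemicontinuous fun y => ⨆ a ∈ S, g a y := by
  refine lowerSemicontinuous_ciSup (fun y => bddAbove_range_biSup (hbdd y)) fun a => ?_
  by_cases ha : a ∈ S
  · simpa only [ciSup_pos ha] using hg a ha
  · have : IsEmpty (a ∈ S) := ⟨ha⟩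
    simpa only [Real.iSup_of_isEmpty] using lowerSemicontinuous_const

end Real

noncomputable def movingSup (r : ℝ) (f : ℝ → ℝ) (s : ℝ) : ℝ := ⨆ τ ∈ Icc (s - r) s, f τ

section MovingSup

variable {r s τ : ℝ} {f g : ℝ → ℝ}

lemma movingSup_le {M : ℝ} (hM : 0 ≤ M) (h : ∀ τ ∈ Icc (s - r) s, f τ ≤ M) :
    movingSup r f s ≤ M :=
  Real.biSup_le hM h

lemma movingSup_nonneg (hf : ∀ τ, 0 ≤ f τ) : 0 ≤ movingSup r f s :=
  Real.biSup_nonneg fun τ _ => hf τ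

lemma le_movingSup (hf : BddAbove (f '' Icc (s - r) s)) (hτ : τ ∈ Icc (s - r) s) :
    f τ ≤ movingSup r f s :=
  Real.le_biSup hf hτ

lemma movingSup_congr (h : EqOn f g (Icc (s - r) s)) : movingSup r f s = movingSup r g s :=
  biSup_congr h

lemma movingSup_le_add_movingSup_sub (hf0 : ∀ τ, 0 ≤ f τ)
    (hf : ∀ a b, BddAbove (f '' Icc a b)) (hτ : τ ∈ Icc (s - r) s) :
    movingSup r f τ ≤ movingSup r f s + movingSup r f (s - r) := by
  refine movingSup_le (add_nonneg (movingSup_nonneg hf0) (movingSup_nonneg hf0)) fun σ hσ => ?_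
  rcases le_total σ (s - r) with h | h
  · have := le_movingSup (hf _ _) (⟨by linarith [hσ.1, hτ.1], h⟩ : σ ∈ Icc (s - r - r) (s - r))
    linarith [movingSup_nonneg (r := r) (s := s) hf0]
  · have := le_movingSup (hf _ _) (⟨h, by linarith [hσ.2, hτ.2]⟩ : σ ∈ Icc (s - r) s)
    linarith [movingSup_nonneg (r := r) (s := s - r) hf0]

lemma movingSup_eq_biSup_sub : movingSup r f s = ⨆ θ ∈ Icc 0 r, f (s - θ) := by
  rw [movingSup, ← (Equiv.subLeft s).iSup_comp]
  refine iSup_congr fun θ => iSup_congr_Prop ?_ fun _ => rfl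
  simp only [Equiv.subLeft_apply, mem_Icc]
  constructor <;> rintro ⟨h₁, h₂⟩ <;> constructor <;> linarith

lemma LowerSemicontinuous.movingSup (hf : LowerSemicontinuous f)
    (hbdd : ∀ a b, BddAbove (f '' Icc a b)) : LowerSemicontinuous (movingSup r f) := by
  simp_rw [funext fun s => movingSup_eq_biSup_sub (r := r) (f := f) (s := s)]
  refine Real.lowerSemicontinuous_biSup (fun θ _ => hf.comp (continuous_id.sub continuous_const))
    fun s => (hbdd (s - r) s).mono ?_
  rintro _ ⟨θ, hθ, rfl⟩
  exact ⟨s - θ, ⟨by linarith [hθ.2], by linarith [hθ.1]⟩, rfl⟩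

lemma intervalIntegrable_movingSup (hf : LowerSemicontinuous f) (hf0 : ∀ τ, 0 ≤ f τ)
    (hbdd : ∀ a b, BddAbove (f '' Icc a b)) (a b : ℝ) :
    IntervalIntegrable (movingSup r f) volume a b := by
  obtain ⟨M, hM⟩ := hbdd (min a b - r) (max a b)
  refine (IntegrableOn.of_bound measure_Icc_lt_top
    (hf.movingSup hbdd).measurable.aestronglyMeasurable (max M 0) ?_).intervalIntegrable
  refine ae_restrict_of_forall_mem measurableSet_Icc fun s hs => ?_
  rw [Real.norm_of_nonneg (movingSup_nonneg hf0)]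
  refine movingSup_le (le_max_right _ _) fun τ hτ => (hM ?_).trans (le_max_left _ _)
  exact mem_image_of_mem f ⟨by linarith [hs.1, hτ.1], by linarith [hs.2, hτ.2]⟩

end MovingSup

def MeanVanishes (r : ℝ) (g : ℝ → ℝ) : Prop :=
  Tendsto (fun T : ℝ => (1 / T) * ∫ s in r..T, g s) atTop (𝓝 0)

namespace MeanVanishes

variable {r : ℝ} {f g : ℝ → ℝ}

lemma congr (h : MeanVanishes r f) (hfg : ∀ s ≥ r, f s = g s) : MeanVanishes r g := by
  refine h.congr' <| (eventually_ge_atTop r).mono fun T hT => ?_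
  rw [intervalIntegral.integral_congr fun s hs => hfg s (uIcc_of_le hT ▸ hs).1]

lemma const_mul (h : MeanVanishes r f) (c : ℝ) : MeanVanishes r fun s => c * f s := by
  simpa only [MeanVanishes, intervalIntegral.integral_const_mul, mul_left_comm _ c, mul_zero]
    using Tendsto.const_mul c h

lemma add (hf : MeanVanishes r f) (hg : MeanVanishes r g)
    (hfi : ∀ T, IntervalIntegrable f volume r T) (hgi : ∀ T, IntervalIntegrable g volume r T) :
    MeanVanishes r (f + g) := by
  simpa only [MeanVanishes, Pi.add_apply, intervalIntegral.integral_add (hfi _) (hgi _), mul_add,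
    add_zero] using Tendsto.add hf hg

lemma of_le (hg : MeanVanishes r g) (hgi : ∀ T, IntervalIntegrable g volume r T)
    (hf0 : ∀ s ≥ r, 0 ≤ f s) (hfg : ∀ s ≥ r, f s ≤ g s) : MeanVanishes r f := by
  refine tendsto_of_tendsto_of_tendsto_of_le_of_le' tendsto_const_nhds hg ?_ ?_ <;>
    filter_upwards [eventually_ge_atTop r, eventually_gt_atTop 0] with T hrT hT
  · exact mul_nonneg (by positivity) (intervalIntegral.integral_nonneg hrT fun s hs => hf0 s hs.1)
  · refine mul_le_mul_of_nonneg_left ?_ (by positivity)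
    by_cases hfi : IntervalIntegrable f volume r T
    · exact intervalIntegral.integral_mono_on hrT hfi (hgi T) fun s hs => hfg s hs.1
    · rw [intervalIntegral.integral_undef hfi]
      exact intervalIntegral.integral_nonneg hrT fun s hs => (hf0 s hs.1).trans (hfg s hs.1)

lemma comp_sub (hr : 0 ≤ r) (h : MeanVanishes r g) (hg0 : ∀ s ≥ 0, 0 ≤ g s)
    (hgi : ∀ T, IntervalIntegrable g volume 0 T) : MeanVanishes r fun s => g (s - r) := by
  have hgi' : ∀ T, IntervalIntegrable g volume r T := fun T => (hgi r).symm.trans (hgi T)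
  have hC : Tendsto (fun T : ℝ => (∫ s in (0)..r, g s) * T⁻¹) atTop (𝓝 0) := by
    simpa only [mul_zero] using tendsto_inv_atTop_zero.const_mul (∫ s in (0)..r, g s)
  have hsum := Tendsto.add hC h
  rw [add_zero] at hsum
  refine tendsto_of_tendsto_of_tendsto_of_le_of_le' tendsto_const_nhds hsum ?_ ?_ <;>
    filter_upwards [eventually_ge_atTop r, eventually_gt_atTop 0] with T hrT hT
  · refine mul_nonneg (by positivity) (intervalIntegral.integral_nonneg hrT fun s hs => ?_)
    exact hg0 _ (by linarith [hs.1])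
  · have hshift : ∫ s in r..T, g (s - r) ≤ (∫ s in (0)..r, g s) + ∫ s in r..T, g s := calc
      ∫ s in r..T, g (s - r) = ∫ s in (0)..(T - r), g s := by
        rw [intervalIntegral.integral_comp_sub_right, sub_self]
      _ ≤ ∫ s in (0)..T, g s := intervalIntegral.integral_mono_interval le_rfl (by linarith)
          (by linarith) ((ae_restrict_iff' measurableSet_Ioc).2 <| .of_forall fun s hs =>
            hg0 s hs.1.le) (hgi T)
      _ = (∫ s in (0)..r, g s) + ∫ s in r..T, g s :=
        (intervalIntegral.integral_add_adjacent_intervals (hgi r) (hgi' T)).symm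
    calc 1 / T * ∫ s in r..T, g (s - r)
        ≤ 1 / T * ((∫ s in (0)..r, g s) + ∫ s in r..T, g s) := by gcongr
      _ = (∫ s in (0)..r, g s) * T⁻¹ + 1 / T * ∫ s in r..T, g s := by ring

theorem movingSup_of_le_add {B : ℝ} {a c φ : ℝ → ℝ} (hr : 0 ≤ r) (hB : 0 ≤ B)
    (ha : LowerSemicontinuous a) (ha0 : ∀ τ, 0 ≤ a τ) (ha_bdd : ∀ x y, BddAbove (a '' Icc x y))
    (hc : Continuous c) (hc0 : ∀ τ, 0 ≤ c τ) (hφ0 : ∀ τ, 0 ≤ φ τ)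
    (hφ : ∀ τ ≥ 0, φ τ ≤ a τ + B * movingSup r c τ)
    (haM : MeanVanishes r (movingSup r a)) (hcM : MeanVanishes r (movingSup r c)) :
    MeanVanishes r (movingSup r φ) := by
  have hc_bdd : ∀ x y, BddAbove (c '' Icc x y) := fun x y =>
    isCompact_Icc.bddAbove_image hc.continuousOn
  have hai := intervalIntegrable_movingSup (r := r) ha ha0 ha_bdd r
  have hci := intervalIntegrable_movingSup (r := r) hc.lowerSemicontinuous hc0 hc_bdd
  have hci_sub : ∀ T, IntervalIntegrable (fun s => movingSup r c (s - r)) volume r T := fun T => by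
    simpa only [zero_add, sub_add_cancel] using (hci 0 (T - r)).comp_sub_right r
  have hcM_sub : MeanVanishes r fun s => movingSup r c (s - r) :=
    hcM.comp_sub hr (fun s _ => movingSup_nonneg hc0) (hci 0)
  have hcB : ∀ T, IntervalIntegrable
      ((fun s => B * movingSup r c s) + fun s => B * movingSup r c (s - r)) volume r T :=
    fun T => ((hci r T).const_mul B).add ((hci_sub T).const_mul B)
  have hM := haM.add ((hcM.const_mul B).add (hcM_sub.const_mul B) (fun T => (hci r T).const_mul B)
    fun T => (hci_sub T).const_mul B) hai hcB
  refine hM.of_le (fun T => (hai T).add (hcB T)) (fun s _ => movingSup_nonneg hφ0)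
    fun s hs => movingSup_le ?_ fun τ hτ => ?_
  · have := movingSup_nonneg (r := r) (s := s) ha0
    have := movingSup_nonneg (r := r) (s := s) hc0
    have := movingSup_nonneg (r := r) (s := s - r) hc0
    simp only [Pi.add_apply]
    positivity
  · calc φ τ ≤ a τ + B * movingSup r c τ := hφ τ (by linarith [hτ.1])
      _ ≤ movingSup r a s + B * (movingSup r c s + movingSup r c (s - r)) := by
        gcongr
        · exact le_movingSup (ha_bdd _ _) hτ
        · exact movingSup_le_add_movingSup_sub hc0 hc_bdd hτ
      _ = _ := by simp only [Pi.add_apply]; ring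

end MeanVanishes

section PSAP

variable {E Y : Type*} [NormedAddCommGroup E] [NormedAddCommGroup Y] {ω r : ℝ}

lemma psapClass_iff_meanVanishes {v : ℝ → Y} :
    PSAPclass ω r v ↔ MeanVanishes r (movingSup r fun τ => ‖v (τ + ω) - v τ‖) :=
  Iff.rfl

lemma psapUnif_iff_meanVanishes {F : ℝ → E → Y} :
    PSAPunif ω r F ↔ ∀ L > 0,
      MeanVanishes r (movingSup r fun τ => ⨆ x ∈ {x : E | ‖x‖ ≤ L}, ‖F (τ + ω) x - F τ x‖) :=
  Iff.rfl

lemma PSAPclass.congr {v w : ℝ → Y} (hω : 0 ≤ ω) (hv : PSAPclass ω r v)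
    (hvw : ∀ t ≥ 0, v t = w t) : PSAPclass ω r w :=
  psapClass_iff_meanVanishes.2 <| (psapClass_iff_meanVanishes.1 hv).congr fun _ _ =>
    movingSup_congr fun τ hτ => by
      have hτ0 : 0 ≤ τ := by linarith [hτ.1]
      simp only [hvw τ hτ0, hvw (τ + ω) (by linarith)]

lemma PSAPunif.congr {F G : ℝ → E → Y} (hω : 0 ≤ ω) (hF : PSAPunif ω r F)
    (hFG : ∀ t ≥ 0, F t = G t) : PSAPunif ω r G :=
  psapUnif_iff_meanVanishes.2 fun L hL => (psapUnif_iff_meanVanishes.1 hF L hL).congr fun _ _ =>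
    movingSup_congr fun τ hτ => by
      have hτ0 : 0 ≤ τ := by linarith [hτ.1]
      simp only [hFG τ hτ0, hFG (τ + ω) (by linarith)]

end PSAP

section History

variable {X : Type*} [NormedAddCommGroup X] {r t : ℝ} {u v : ℝ → X}

lemma hist_apply (hv : Continuous v) (t : ℝ) (θ : Icc (-r) (0 : ℝ)) :
    hist r v t θ = v (t + θ) := by
  rw [hist, dif_pos (by fun_prop)]
  rfl

lemma hist_congr (h : EqOn u v (Icc (t - r) t)) : hist r u t = hist r v t := by
  have : (fun θ : Icc (-r) (0 : ℝ) => u (t + θ)) = fun θ : Icc (-r) (0 : ℝ) => v (t + θ) :=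
    funext fun θ => h ⟨by linarith [θ.2.1], by linarith [θ.2.2]⟩
  simp only [hist]
  rw [this]

lemma norm_hist_le {L : ℝ} (hv : Continuous v) (hL : 0 ≤ L) (hvL : ∀ t, ‖v t‖ ≤ L) (t : ℝ) :
    ‖hist r v t‖ ≤ L :=
  (ContinuousMap.norm_le _ hL).2 fun θ => hist_apply hv t θ ▸ hvL _

lemma norm_hist_add_sub_le (hv : Continuous v) (ω t : ℝ) :
    ‖hist r v (t + ω) - hist r v t‖ ≤ movingSup r (fun σ => ‖v (σ + ω) - v σ‖) t := by
  refine (ContinuousMap.norm_le _ (movingSup_nonneg fun _ => norm_nonneg _)).2 fun θ => ?_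
  rw [ContinuousMap.sub_apply, hist_apply hv, hist_apply hv, add_right_comm]
  exact le_movingSup (f := fun σ => ‖v (σ + ω) - v σ‖)
    (isCompact_Icc.bddAbove_image (Continuous.continuousOn (by fun_prop)))
    ⟨by linarith [θ.2.1], by linarith [θ.2.2]⟩

end History

section Lipschitz

variable {E Y : Type*} [NormedAddCommGroup E] [NormedAddCommGroup Y] {K : ℝ≥0} {f g : E → Y}

lemma norm_sub_le_norm_sub_zero_add (hf : LipschitzWith K f) (hg : LipschitzWith K g) (x : E) :
    ‖f x - g x‖ ≤ ‖f 0 - g 0‖ + 2 * K * ‖x‖ := by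
  have h₁ := hf.norm_sub_le x 0
  have h₂ := hg.norm_sub_le 0 x
  rw [sub_zero] at h₁
  rw [zero_sub, norm_neg] at h₂
  calc ‖f x - g x‖ ≤ ‖f x - f 0‖ + ‖f 0 - g x‖ := norm_sub_le_norm_sub_add_norm_sub _ _ _
    _ ≤ ‖f x - f 0‖ + (‖f 0 - g 0‖ + ‖g 0 - g x‖) := by
      gcongr
      exact norm_sub_le_norm_sub_add_norm_sub _ _ _
    _ ≤ _ := by linarith

lemma norm_sub_le_biSup_add {S : Set E} (hg : LipschitzWith K g)
    (hbdd : BddAbove ((fun z => ‖f z - g z‖) '' S)) {x : E} (hx : x ∈ S) (y : E) :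
    ‖f x - g y‖ ≤ (⨆ z ∈ S, ‖f z - g z‖) + K * ‖x - y‖ := calc
  ‖f x - g y‖ ≤ ‖f x - g x‖ + ‖g x - g y‖ := norm_sub_le_norm_sub_add_norm_sub _ _ _
  _ ≤ _ := add_le_add (Real.le_biSup hbdd hx) (hg.norm_sub_le x y)

end Lipschitz

theorem PSAPclass.comp_hist {X : Type*} [NormedAddCommGroup X] {r ω L : ℝ} {B : ℝ≥0}
    (hr : 0 ≤ r) {G : ℝ → C(Icc (-r) (0 : ℝ), X) → X} (hG : Continuous (Function.uncurry G))
    (hGL : ∀ t, LipschitzWith B (G t)) {v : ℝ → X} (hv : Continuous v) (hL : 0 < L)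
    (hvL : ∀ t, ‖v t‖ ≤ L) (hGP : PSAPunif ω r G) (hvP : PSAPclass ω r v) :
    PSAPclass ω r fun s => G s (hist r v s) := by
  have hGx : ∀ x, Continuous fun τ => ‖G (τ + ω) x - G τ x‖ := fun x => by fun_prop
  set M : ℝ → ℝ := fun τ => ‖G (τ + ω) 0 - G τ 0‖ + 2 * B * L
  have hM : Continuous M := by fun_prop
  have hM_le : ∀ τ, ∀ x ∈ {x : C(Icc (-r) (0 : ℝ), X) | ‖x‖ ≤ L}, ‖G (τ + ω) x - G τ x‖ ≤ M τ :=
    fun τ x hx => (norm_sub_le_norm_sub_zero_add (hGL _) (hGL τ) x).trans <| by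
      simp only [M]
      gcongr
      exact hx
  have hbdd : ∀ τ, BddAbove ((fun x => ‖G (τ + ω) x - G τ x‖) '' {x | ‖x‖ ≤ L}) :=
    fun τ => ⟨M τ, forall_mem_image.2 (hM_le τ)⟩
  set a : ℝ → ℝ := fun τ => ⨆ x ∈ {x : C(Icc (-r) (0 : ℝ), X) | ‖x‖ ≤ L}, ‖G (τ + ω) x - G τ x‖
  have ha_bdd : ∀ x y, BddAbove (a '' Icc x y) := fun x y => by
    obtain ⟨K, hK⟩ := (isCompact_Icc (a := x) (b := y)).bddAbove_image hM.continuousOn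
    refine ⟨K, forall_mem_image.2 fun τ hτ => ?_⟩
    exact (Real.biSup_le (by positivity) (hM_le τ)).trans (hK (mem_image_of_mem M hτ))
  refine psapClass_iff_meanVanishes.2 <| MeanVanishes.movingSup_of_le_add (a := a)
    (c := fun σ => ‖v (σ + ω) - v σ‖) hr B.2
    (Real.lowerSemicontinuous_biSup (fun x _ => (hGx x).lowerSemicontinuous) hbdd)
    (fun τ => Real.biSup_nonneg fun _ _ => norm_nonneg _) ha_bdd (by fun_prop)
    (fun _ => norm_nonneg _) (fun _ => norm_nonneg _) (fun τ _ => ?_)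
    (psapUnif_iff_meanVanishes.1 hGP L hL) (psapClass_iff_meanVanishes.1 hvP)
  exact (norm_sub_le_biSup_add (hGL τ) (hbdd τ) (norm_hist_le hv hL.le hvL _) _).trans
    (add_le_add le_rfl (mul_le_mul_of_nonneg_left (norm_hist_add_sub_le hv ω τ) B.2))

theorem psapClass_comp_lipschitz_general {X : Type*} [NormedAddCommGroup X]
    (r ω : ℝ) (hr : 0 < r) (hω : 0 < ω)
    (F : ℝ → C(Set.Icc (-r) (0:ℝ), X) → X)
    (hFcont : ContinuousOn (fun p : ℝ × C(Set.Icc (-r) (0:ℝ), X) => F p.1 p.2)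
      (Set.Ici 0 ×ˢ Set.univ))
    (hFP : PSAPunif ω r F)
    (LF : ℝ → ℝ)
    (hLFbdd : ∃ B, ∀ t ≥ (0:ℝ), LF t ≤ B)
    (hLip : ∀ t ≥ (0:ℝ), ∀ ψ₁ ψ₂ : C(Set.Icc (-r) (0:ℝ), X),
      ‖F t ψ₁ - F t ψ₂‖ ≤ LF t * ‖ψ₁ - ψ₂‖)
    (u : ℝ → X)
    (hucont : ContinuousOn u (Set.Ici (-r)))
    (hubdd : ∃ B, ∀ t ≥ -r, ‖u t‖ ≤ B)
    (huP : PSAPclass ω r u) :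
    PSAPclass ω r (fun s => F s (hist r u s)) := by
  obtain ⟨B, hB⟩ := hLFbdd
  obtain ⟨L, hL⟩ := hubdd
  set G : ℝ → C(Icc (-r) (0 : ℝ), X) → X := fun t => F (max t 0)
  set v : ℝ → X := fun t => u (max t (-r))
  have hG : Continuous (Function.uncurry G) :=
    hFcont.comp_continuous (f := fun p : ℝ × C(Icc (-r) (0 : ℝ), X) => (max p.1 0, p.2))
      (by fun_prop) fun p => ⟨le_max_right p.1 0, trivial⟩
  have hv : Continuous v := hucont.comp_continuous (by fun_prop) fun t => le_max_right t (-r)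
  have hGL : ∀ t, LipschitzWith B.toNNReal (G t) := fun t =>
    .of_dist_le_mul fun ψ₁ ψ₂ => by
      simpa only [dist_eq_norm] using (hLip _ (le_max_right t 0) ψ₁ ψ₂).trans
        (by gcongr; exact (hB _ (le_max_right t 0)).trans B.le_coe_toNNReal)
  have hvL : ∀ t, ‖v t‖ ≤ max L 1 := fun t => (hL _ (le_max_right t (-r))).trans (le_max_left L 1)
  refine (PSAPclass.comp_hist hr.le hG hGL hv (by positivity) hvL
    (hFP.congr hω.le fun t ht => ?_) (huP.congr hω.le fun t ht => ?_)).congr hω.le fun t ht => ?_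
  · simp only [G, max_eq_left ht]
  · simp only [v, max_eq_left (by linarith : -r ≤ t)]
  · have hvu : EqOn v u (Icc (t - r) t) := fun τ hτ => by
      simp only [v, max_eq_left (by linarith [hτ.1] : -r ≤ τ)]
    simp only [G, hist_congr hvu, max_eq_left ht]

/-- Lemma 2.4: if `F ∈ PSAP_{ω,r}(C,X)` is Lipschitz with a bounded
continuous coefficient `L_F`, and `u ∈ C_b([−r,∞),X)` with `u|_{[0,∞)} ∈ PSAP_{ω,r}(X)`,
then `s ↦ F(s,u_s)` belongs to `PSAP_{ω,r}(X)`. -/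
theorem psapClass_comp_lipschitz {X : Type*} [NormedAddCommGroup X] [NormedSpace ℝ X]
    (r ω : ℝ) (hr : 0 < r) (hω : 0 < ω)
    (F : ℝ → C(Set.Icc (-r) (0:ℝ), X) → X)
    (hFcont : ContinuousOn (fun p : ℝ × C(Set.Icc (-r) (0:ℝ), X) => F p.1 p.2)
      (Set.Ici 0 ×ˢ Set.univ))
    (hFP : PSAPunif ω r F)
    (LF : ℝ → ℝ)
    (hLFcont : ContinuousOn LF (Set.Ici 0))
    (hLFpos : ∀ t ≥ (0:ℝ), 0 ≤ LF t)
    (hLFbdd : ∃ B, ∀ t ≥ (0:ℝ), LF t ≤ B)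
    (hLip : ∀ t ≥ (0:ℝ), ∀ ψ₁ ψ₂ : C(Set.Icc (-r) (0:ℝ), X),
      ‖F t ψ₁ - F t ψ₂‖ ≤ LF t * ‖ψ₁ - ψ₂‖)
    (u : ℝ → X)
    (hucont : ContinuousOn u (Set.Ici (-r)))
    (hubdd : ∃ B, ∀ t ≥ -r, ‖u t‖ ≤ B)
    (huP : PSAPclass ω r u) :
    PSAPclass ω r (fun s => F s (hist r u s)) :=
  psapClass_comp_lipschitz_general r ω hr hω F hFcont hFP LF hLFbdd hLip u hucont hubdd huP
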